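/- Let Ω ⊆ ℝ^N be nonempty open of finite measure, ω : Ω × Ω → [0,∞) continuous and symmetric with ω ≥ k > 0, and u ∈ L^1(Ω) with weak nonlocal gradient ∇_ω u ∈ L^1(Ω × Ω; ℝ^N) (induced by ω). Then u has weak nonlocal gradient induced by the constant weight 1, ∇_1 u = ∇_ω u / ω ∈ L^1(Ω × Ω; ℝ^N), and ‖∇_1 u‖_{L^1(Ω×Ω)} ≤ (1/k) ‖∇_ω u‖_{L^1(Ω×Ω)}. -/

import Mathlib

open MeasureTheory Set Metric
open scoped ENNReal NNReal

/-- The nonlocal adjoint `i`-th partial derivative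
`∂*_{ω,i}(ψ)(x) = ∫_Ω ∂_{x_i}[ω(x,y)(ψ(y,x) − ψ(x,y))] dy` of a test function `ψ`. -/
noncomputable def nlAdjDeriv {N : ℕ} (Ω : Set (EuclideanSpace ℝ (Fin N)))
    (ω : EuclideanSpace ℝ (Fin N) → EuclideanSpace ℝ (Fin N) → ℝ) (i : Fin N)
    (ψ : EuclideanSpace ℝ (Fin N) × EuclideanSpace ℝ (Fin N) → ℝ)
    (x : EuclideanSpace ℝ (Fin N)) : ℝ :=
  ∫ y in Ω, fderiv ℝ (fun x' => ω x' y * (ψ (y, x') - ψ (x', y))) x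
    (EuclideanSpace.single i (1:ℝ))

/-- `G : Ω × Ω → ℝ^N` is a weak nonlocal gradient of `u` induced by the weight `ω`:
for each direction `i` and each test function `ψ ∈ C_c^1(Ω × Ω)`,
`∫_Ω u ∂*_{ω,i}(ψ) dx = −∫_{Ω×Ω} G_i ψ dx dy`. -/
def HasNLGradientOn {N : ℕ} (Ω : Set (EuclideanSpace ℝ (Fin N)))
    (ω : EuclideanSpace ℝ (Fin N) → EuclideanSpace ℝ (Fin N) → ℝ)
    (u : EuclideanSpace ℝ (Fin N) → ℝ)
    (G : EuclideanSpace ℝ (Fin N) × EuclideanSpace ℝ (Fin N) → EuclideanSpace ℝ (Fin N)) :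
    Prop :=
  ∀ i : Fin N, ∀ ψ : EuclideanSpace ℝ (Fin N) × EuclideanSpace ℝ (Fin N) → ℝ,
    ContDiff ℝ 1 ψ → HasCompactSupport ψ → tsupport ψ ⊆ Ω ×ˢ Ω →
    ∫ x in Ω, u x * nlAdjDeriv Ω ω i ψ x
      = - ∫ z, (G z) i * ψ z ∂((volume.restrict Ω).prod (volume.restrict Ω))

/-!
Test the `ω`-identity against `φ = ψ / ω`, which is again `C¹` with compact support in `Ω × Ω`
since `ω` is `C¹` and nonvanishing there. By the symmetry of `ω`,
`ω(x,y) (φ(y,x) − φ(x,y)) = ψ(y,x) − ψ(x,y)` near every `x ∈ Ω`, so `∂*_{ω,i} φ = ∂*_{1,i} ψ`,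
while `∫ (∇_ω u)_i φ = ∫ (∇_ω u / ω)_i ψ`. The `L¹` bound is the pointwise bound
`|∇_ω u / ω| ≤ |∇_ω u| / k`.
-/

theorem ContDiff.mul_of_tsupport_subset {𝕜 E : Type*} [NontriviallyNormedField 𝕜]
    [NormedAddCommGroup E] [NormedSpace 𝕜 E] {n : WithTop ℕ∞} {f g : E → 𝕜} {U : Set E}
    (hU : IsOpen U) (hf : ContDiff 𝕜 n f) (hfU : tsupport f ⊆ U) (hg : ContDiffOn 𝕜 n g U) :
    ContDiff 𝕜 n fun x => f x * g x := by
  refine contDiff_iff_contDiffAt.2 fun x => ?_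
  by_cases hx : x ∈ U
  · exact hf.contDiffAt.mul (hg.contDiffAt (hU.mem_nhds hx))
  · have hf0 : f =ᶠ[nhds x] 0 := notMem_tsupport_iff_eventuallyEq.1 fun h => hx (hfU h)
    refine (contDiffAt_const (c := (0 : 𝕜))).congr_of_eventuallyEq ?_
    filter_upwards [hf0] with y hy
    simp [hy]

theorem norm_inv_smul_le_of_le {E : Type*} [NormedAddCommGroup E] [NormedSpace ℝ E]
    {k a : ℝ} (hk : 0 < k) (hka : k ≤ a) (v : E) : ‖a⁻¹ • v‖ ≤ k⁻¹ * ‖v‖ := by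
  rw [norm_smul, norm_inv, Real.norm_of_nonneg (hk.trans_le hka).le]
  gcongr

theorem enorm_inv_smul_le_of_le {E : Type*} [NormedAddCommGroup E] [NormedSpace ℝ E]
    {k a : ℝ} (hk : 0 < k) (hka : k ≤ a) (v : E) :
    ‖a⁻¹ • v‖ₑ ≤ (ENNReal.ofReal k)⁻¹ * ‖v‖ₑ := by
  rw [← ofReal_norm, ← ofReal_norm, ← ENNReal.ofReal_inv_of_pos hk,
    ← ENNReal.ofReal_mul (inv_nonneg.2 hk.le)]
  exact ENNReal.ofReal_le_ofReal (norm_inv_smul_le_of_le hk hka v)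

section WeightedQuotient

variable {α E : Type*} [MeasurableSpace α] [NormedAddCommGroup E] [NormedSpace ℝ E]
  {μ : Measure α} {f : α → ℝ} {G : α → E} {k : ℝ}

theorem MeasureTheory.Integrable.inv_smul_of_le (hG : Integrable G μ)
    (hf : AEStronglyMeasurable f μ) (hk : 0 < k) (hkf : ∀ᵐ z ∂μ, k ≤ f z) :
    Integrable (fun z => (f z)⁻¹ • G z) μ :=
  (hG.norm.const_mul k⁻¹).mono' (hf.aemeasurable.inv.aestronglyMeasurable.smul hG.1)
    (hkf.mono fun z hz => norm_inv_smul_le_of_le hk hz (G z))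

theorem lintegral_enorm_inv_smul_le (hk : 0 < k) (hkf : ∀ᵐ z ∂μ, k ≤ f z) :
    ∫⁻ z, ‖(f z)⁻¹ • G z‖ₑ ∂μ ≤ (ENNReal.ofReal k)⁻¹ * ∫⁻ z, ‖G z‖ₑ ∂μ :=
  calc ∫⁻ z, ‖(f z)⁻¹ • G z‖ₑ ∂μ ≤ ∫⁻ z, (ENNReal.ofReal k)⁻¹ * ‖G z‖ₑ ∂μ :=
        lintegral_mono_ae (hkf.mono fun z hz => enorm_inv_smul_le_of_le hk hz (G z))
    _ = (ENNReal.ofReal k)⁻¹ * ∫⁻ z, ‖G z‖ₑ ∂μ :=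
        lintegral_const_mul' _ _ (ENNReal.inv_ne_top.2 (ENNReal.ofReal_pos.2 hk).ne')

end WeightedQuotient

section NonlocalGradient

variable {N : ℕ} {Ω : Set (EuclideanSpace ℝ (Fin N))}
  {ω : EuclideanSpace ℝ (Fin N) → EuclideanSpace ℝ (Fin N) → ℝ}

theorem nlAdjDeriv_one_eq (hΩ : IsOpen Ω) (hsymm : ∀ x ∈ Ω, ∀ y ∈ Ω, ω x y = ω y x)
    {ψ φ : EuclideanSpace ℝ (Fin N) × EuclideanSpace ℝ (Fin N) → ℝ}
    (hφ : ∀ z ∈ Ω ×ˢ Ω, ω z.1 z.2 * φ z = ψ z) (i : Fin N) {x : EuclideanSpace ℝ (Fin N)}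
    (hx : x ∈ Ω) : nlAdjDeriv Ω (fun _ _ => 1) i ψ x = nlAdjDeriv Ω ω i φ x := by
  refine setIntegral_congr_fun hΩ.measurableSet fun y hy => ?_
  have hloc : (fun x' => 1 * (ψ (y, x') - ψ (x', y)))
      =ᶠ[nhds x] fun x' => ω x' y * (φ (y, x') - φ (x', y)) := by
    filter_upwards [hΩ.mem_nhds hx] with x' hx'
    rw [← hφ (y, x') ⟨hy, hx'⟩, ← hφ (x', y) ⟨hx', hy⟩, hsymm y hy x' hx']
    ring
  dsimp only
  rw [hloc.fderiv_eq]

theorem HasNLGradientOn.to_unit_weight (hΩ : IsOpen Ω)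
    (hω : ContDiffOn ℝ 1 (fun z : EuclideanSpace ℝ (Fin N) × EuclideanSpace ℝ (Fin N) =>
      ω z.1 z.2) (Ω ×ˢ Ω))
    (hsymm : ∀ x ∈ Ω, ∀ y ∈ Ω, ω x y = ω y x) (hne : ∀ z ∈ Ω ×ˢ Ω, ω z.1 z.2 ≠ 0)
    {u : EuclideanSpace ℝ (Fin N) → ℝ}
    {G : EuclideanSpace ℝ (Fin N) × EuclideanSpace ℝ (Fin N) → EuclideanSpace ℝ (Fin N)}
    (hG : HasNLGradientOn Ω ω u G) :
    HasNLGradientOn Ω (fun _ _ => 1) u fun z => (ω z.1 z.2)⁻¹ • G z := by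
  intro i ψ hψ hψc hψΩ
  have hΩΩ : IsOpen (Ω ×ˢ Ω) := hΩ.prod hΩ
  set φ := fun z : EuclideanSpace ℝ (Fin N) × EuclideanSpace ℝ (Fin N) =>
    ψ z * (ω z.1 z.2)⁻¹
  have hφψ : ∀ z ∈ Ω ×ˢ Ω, ω z.1 z.2 * φ z = ψ z := fun z hz => by
    simp only [φ]
    field_simp [hne z hz]
  have hφ : ContDiff ℝ 1 φ := hψ.mul_of_tsupport_subset hΩΩ hψΩ (hω.inv hne)
  have hGφ := hG i φ hφ hψc.mul_right (tsupport_mul_subset_left.trans hψΩ)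
  calc ∫ x in Ω, u x * nlAdjDeriv Ω (fun _ _ => 1) i ψ x
      = ∫ x in Ω, u x * nlAdjDeriv Ω ω i φ x :=
        setIntegral_congr_fun hΩ.measurableSet fun x hx => by
          rw [nlAdjDeriv_one_eq hΩ hsymm hφψ i hx]
    _ = -∫ z, G z i * φ z ∂((volume.restrict Ω).prod (volume.restrict Ω)) := hGφ
    _ = -∫ z, ((ω z.1 z.2)⁻¹ • G z) i * ψ z
          ∂((volume.restrict Ω).prod (volume.restrict Ω)) := by
        simp only [φ, PiLp.smul_apply, smul_eq_mul]
        congr 2 with z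
        ring

end NonlocalGradient

theorem statement18_general (N : ℕ) (Ω : Set (EuclideanSpace ℝ (Fin N)))
    (hΩ_open : IsOpen Ω)
    (ω : EuclideanSpace ℝ (Fin N) → EuclideanSpace ℝ (Fin N) → ℝ)
    (hω_smooth : ContDiffOn ℝ 1 (fun z : EuclideanSpace ℝ (Fin N) × EuclideanSpace ℝ (Fin N)
      => ω z.1 z.2) (Ω ×ˢ Ω))
    (hω_symm : ∀ x ∈ Ω, ∀ y ∈ Ω, ω x y = ω y x)
    (k : ℝ) (hk : 0 < k) (hω_lb : ∀ x ∈ Ω, ∀ y ∈ Ω, k ≤ ω x y)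
    (u : EuclideanSpace ℝ (Fin N) → ℝ)
    (Gω : EuclideanSpace ℝ (Fin N) × EuclideanSpace ℝ (Fin N) → EuclideanSpace ℝ (Fin N))
    (hGω : HasNLGradientOn Ω ω u Gω)
    (hGω_int : Integrable Gω ((volume.restrict Ω).prod (volume.restrict Ω))) :
    HasNLGradientOn Ω (fun _ _ => (1:ℝ)) u (fun z => (ω z.1 z.2)⁻¹ • Gω z) ∧
    Integrable (fun z => (ω z.1 z.2)⁻¹ • Gω z)
      ((volume.restrict Ω).prod (volume.restrict Ω)) ∧
    ∫⁻ z, (‖(ω z.1 z.2)⁻¹ • Gω z‖₊ : ℝ≥0∞)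
        ∂((volume.restrict Ω).prod (volume.restrict Ω))
      ≤ (ENNReal.ofReal k)⁻¹ *
        ∫⁻ z, (‖Gω z‖₊ : ℝ≥0∞) ∂((volume.restrict Ω).prod (volume.restrict Ω)) := by
  have hΩΩ : MeasurableSet (Ω ×ˢ Ω) := (hΩ_open.prod hΩ_open).measurableSet
  have hlb : ∀ᵐ z ∂((volume.restrict Ω).prod (volume.restrict Ω)), k ≤ ω z.1 z.2 := by
    rw [Measure.prod_restrict]
    filter_upwards [ae_restrict_mem hΩΩ] with z hz using hω_lb _ hz.1 _ hz.2
  have hω_meas : AEStronglyMeasurable (fun z : EuclideanSpace ℝ (Fin N) ×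
      EuclideanSpace ℝ (Fin N) => ω z.1 z.2) ((volume.restrict Ω).prod (volume.restrict Ω)) := by
    rw [Measure.prod_restrict]
    exact hω_smooth.continuousOn.aestronglyMeasurable hΩΩ
  refine ⟨hGω.to_unit_weight hΩ_open hω_smooth hω_symm
      fun z hz => (hk.trans_le (hω_lb _ hz.1 _ hz.2)).ne',
    hGω_int.inv_smul_of_le hω_meas hk hlb, lintegral_enorm_inv_smul_le hk hlb⟩

/-- Let `Ω` be nonempty open of finite measure, `ω` a `C^1` symmetric weight
with `ω ≥ k > 0`, and `u ∈ L^1(Ω)` with weak nonlocal gradient `∇_ω u ∈ L^1(Ω × Ω; ℝ^N)`.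
Then `∇_1 u = ∇_ω u / ω` is a weak nonlocal gradient of `u` for the constant weight `1`,
it belongs to `L^1(Ω × Ω; ℝ^N)`, and `‖∇_1 u‖_{L^1} ≤ (1/k) ‖∇_ω u‖_{L^1}`. -/
theorem statement18 (N : ℕ) (Ω : Set (EuclideanSpace ℝ (Fin N)))
    (hΩ_open : IsOpen Ω) (hΩ_ne : Ω.Nonempty) (hΩ_fin : volume Ω < ⊤)
    (ω : EuclideanSpace ℝ (Fin N) → EuclideanSpace ℝ (Fin N) → ℝ)
    (hω_smooth : ContDiffOn ℝ 1 (fun z : EuclideanSpace ℝ (Fin N) × EuclideanSpace ℝ (Fin N)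
      => ω z.1 z.2) (Ω ×ˢ Ω))
    (hω_nonneg : ∀ x ∈ Ω, ∀ y ∈ Ω, 0 ≤ ω x y)
    (hω_symm : ∀ x ∈ Ω, ∀ y ∈ Ω, ω x y = ω y x)
    (k : ℝ) (hk : 0 < k) (hω_lb : ∀ x ∈ Ω, ∀ y ∈ Ω, k ≤ ω x y)
    (u : EuclideanSpace ℝ (Fin N) → ℝ)
    (Gω : EuclideanSpace ℝ (Fin N) × EuclideanSpace ℝ (Fin N) → EuclideanSpace ℝ (Fin N))
    (hu : Integrable u (volume.restrict Ω))
    (hGω : HasNLGradientOn Ω ω u Gω)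
    (hGω_int : Integrable Gω ((volume.restrict Ω).prod (volume.restrict Ω))) :
    HasNLGradientOn Ω (fun _ _ => (1:ℝ)) u (fun z => (ω z.1 z.2)⁻¹ • Gω z) ∧
    Integrable (fun z => (ω z.1 z.2)⁻¹ • Gω z)
      ((volume.restrict Ω).prod (volume.restrict Ω)) ∧
    ∫⁻ z, (‖(ω z.1 z.2)⁻¹ • Gω z‖₊ : ℝ≥0∞)
        ∂((volume.restrict Ω).prod (volume.restrict Ω))
      ≤ (ENNReal.ofReal k)⁻¹ *
        ∫⁻ z, (‖Gω z‖₊ : ℝ≥0∞) ∂((volume.restrict Ω).prod (volume.restrict Ω)) :=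
  statement18_general N Ω hΩ_open ω hω_smooth hω_symm k hk hω_lb u Gω hGω hGω_int
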